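/- arXiv:2403.12336 — 3 statements merged into one kernel-verified Lean document; each statement's English description precedes it below -/
import Mathlib

section
/- Let x₁, x₂ be real numbers with ζ := x₂ − x₁ > 0 and let α, β, m > 0. If α ≠ β, then ∫_ℝ |x−x₁|^m e^{−α(x−x₁)₊} e^{−β(x₂−x)₊} dx ≤ K(α,β,m)·max((1+ζ^m)e^{−αζ}, e^{−βζ}) for a constant K(α,β,m) depending only on α,β,m. If α = β, then ∫_ℝ |x−x₁|^m e^{−α(x−x₁)₊} e^{−α(x₂−x)₊} dx ≤ K(α,m)·(1+ζ^{m+1})·e^{−αζ} for a constant K(α,m) depending only on α,m. -/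
/-!
After translating `x₁` to `0`, with `ζ = x₂ - x₁`, the exponent `α x₊ + β (ζ - x)₊` dominates a
linear function of `|x - ζ|` or of `|x|`: for `α < β` it is at least `α ζ + c |x - ζ|` with
`c = min α (β - α)`, and for `β < α` it is at least `β ζ + c |x|` with `c = min β (α - β)`.
The integral is then at most `e^{-αζ}` resp. `e^{-βζ}` times a moment `∫ |x|^m e^{-c|x - ζ|}`
of a Laplace density, which `|x|^m ≤ 2^m (|x - ζ|^m + ζ^m)` bounds by `C (1 + ζ^m)`.
For `α = β` there is no gain on `[0, ζ]`, where the integrand is at most `ζ^m e^{-αζ}`;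
this interval produces the extra factor `ζ`.
-/

open MeasureTheory Real Set

theorem integrable_comp_abs_of_integrableOn_Ioi {E : Type*} [NormedAddCommGroup E] {f : ℝ → E}
    (hf : IntegrableOn f (Ioi 0)) : Integrable fun x => f |x| := by
  have h_Ioi : IntegrableOn (fun x => f |x|) (Ioi 0) :=
    hf.congr_fun (fun x hx => by rw [abs_of_pos hx]) measurableSet_Ioi
  have h_Iic : IntegrableOn (fun x => f |x|) (Iic 0) := by
    have h_neg : MeasurableEmbedding fun x : ℝ => -x := (Homeomorph.neg ℝ).measurableEmbedding
    rw [← Measure.map_neg_eq_self (volume : Measure ℝ), h_neg.integrableOn_map_iff]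
    simp_rw [Function.comp_def, abs_neg, neg_preimage, neg_Iic, neg_zero]
    rwa [integrableOn_Ici_iff_integrableOn_Ioi]
  have h := h_Iic.union h_Ioi
  rwa [Iic_union_Ioi, integrableOn_univ] at h

theorem integrable_abs_rpow_mul_exp_neg_mul_abs {c s : ℝ} (hc : 0 < c) (hs : -1 < s) :
    Integrable fun x : ℝ => |x| ^ s * exp (-c * |x|) := by
  have h := integrableOn_rpow_mul_exp_neg_mul_rpow hs one_pos hc
  simp_rw [rpow_one] at h
  exact integrable_comp_abs_of_integrableOn_Ioi h

theorem rpow_add_le_two_rpow_mul_add {a b s : ℝ} (ha : 0 ≤ a) (hb : 0 ≤ b) (hs : 0 ≤ s) :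
    (a + b) ^ s ≤ 2 ^ s * (a ^ s + b ^ s) := by
  calc (a + b) ^ s ≤ (2 * max a b) ^ s := by
        gcongr
        linarith [le_max_left a b, le_max_right a b]
    _ = 2 ^ s * max (a ^ s) (b ^ s) := by
        rw [mul_rpow zero_le_two (ha.trans (le_max_left a b)), rpow_max ha hb hs]
    _ ≤ 2 ^ s * (a ^ s + b ^ s) := by
        gcongr
        exact max_le_add_of_nonneg (rpow_nonneg ha s) (rpow_nonneg hb s)

theorem abs_rpow_le_two_rpow_mul_abs_sub_add {s : ℝ} (hs : 0 ≤ s) (x y : ℝ) :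
    |x| ^ s ≤ 2 ^ s * (|x - y| ^ s + |y| ^ s) := by
  calc |x| ^ s ≤ (|x - y| + |y|) ^ s := by
        gcongr
        simpa using abs_add_le (x - y) y
    _ ≤ 2 ^ s * (|x - y| ^ s + |y| ^ s) :=
        rpow_add_le_two_rpow_mul_add (abs_nonneg _) (abs_nonneg _) hs

theorem rpow_le_one_add_rpow_add_one {x s : ℝ} (hx : 0 ≤ x) (hs : 0 ≤ s) :
    x ^ s ≤ 1 + x ^ (s + 1) := by
  rcases le_total x 1 with h | h
  · linarith [rpow_le_one hx h hs, rpow_nonneg hx (s + 1)]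
  · linarith [rpow_le_rpow_of_exponent_le h (show s ≤ s + 1 by linarith)]

theorem mul_add_mul_abs_sub_le_mul_max_add_mul_max {α β c ζ : ℝ} (hζ : 0 ≤ ζ) (hc : 0 ≤ c)
    (hcα : c ≤ α) (hcβ : c ≤ β - α) (x : ℝ) :
    α * ζ + c * |x - ζ| ≤ α * max x 0 + β * max (ζ - x) 0 := by
  rcases le_total x 0 with hx | hx
  · rw [max_eq_right hx, max_eq_left (by linarith), abs_of_nonpos (by linarith)]
    nlinarith
  rcases le_total x ζ with hxζ | hxζ
  · rw [max_eq_left hx, max_eq_left (by linarith), abs_of_nonpos (by linarith)]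
    nlinarith
  · rw [max_eq_left hx, max_eq_right (by linarith), abs_of_nonneg (by linarith)]
    nlinarith

section LaplaceMoments

variable {c s : ℝ}

theorem integrable_exp_neg_mul_abs (hc : 0 < c) : Integrable fun x : ℝ => exp (-c * |x|) := by
  simpa using integrable_abs_rpow_mul_exp_neg_mul_abs hc neg_one_lt_zero

theorem abs_rpow_mul_exp_neg_mul_abs_sub_le (hs : 0 ≤ s) (x y : ℝ) :
    |x| ^ s * exp (-c * |x - y|) ≤
      2 ^ s * (|x - y| ^ s * exp (-c * |x - y|) + |y| ^ s * exp (-c * |x - y|)) := by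
  rw [← add_mul, ← mul_assoc]
  gcongr
  exact abs_rpow_le_two_rpow_mul_abs_sub_add hs x y

variable (hc : 0 < c) (hs : 0 ≤ s) (y : ℝ)
include hc hs

theorem integrable_abs_rpow_mul_exp_neg_mul_abs_sub :
    Integrable fun x : ℝ => |x| ^ s * exp (-c * |x - y|) := by
  have h_cont : Continuous fun x : ℝ => |x| ^ s * exp (-c * |x - y|) := by
    fun_prop (disch := exact hs)
  have h_majorant : Integrable fun x : ℝ =>
      2 ^ s * (|x - y| ^ s * exp (-c * |x - y|) + |y| ^ s * exp (-c * |x - y|)) :=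
    (((integrable_abs_rpow_mul_exp_neg_mul_abs hc (by linarith)).comp_sub_right y).add
      (((integrable_exp_neg_mul_abs hc).comp_sub_right y).const_mul _)).const_mul _
  refine h_majorant.mono' h_cont.aestronglyMeasurable (.of_forall fun x => ?_)
  rw [Real.norm_of_nonneg (by positivity)]
  exact abs_rpow_mul_exp_neg_mul_abs_sub_le hs x y

theorem integral_abs_rpow_mul_exp_neg_mul_abs_sub_le :
    ∫ x : ℝ, |x| ^ s * exp (-c * |x - y|) ≤
      2 ^ s * ((∫ x : ℝ, |x| ^ s * exp (-c * |x|)) + |y| ^ s * ∫ x : ℝ, exp (-c * |x|)) := by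
  have h_int : Integrable fun x : ℝ => |x - y| ^ s * exp (-c * |x - y|) :=
    (integrable_abs_rpow_mul_exp_neg_mul_abs hc (by linarith)).comp_sub_right y
  have h_int' : Integrable fun x : ℝ => |y| ^ s * exp (-c * |x - y|) :=
    ((integrable_exp_neg_mul_abs hc).comp_sub_right y).const_mul _
  calc ∫ x : ℝ, |x| ^ s * exp (-c * |x - y|)
      ≤ ∫ x : ℝ, 2 ^ s * (|x - y| ^ s * exp (-c * |x - y|) + |y| ^ s * exp (-c * |x - y|)) :=
        integral_mono (integrable_abs_rpow_mul_exp_neg_mul_abs_sub hc hs y)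
          ((h_int.add h_int').const_mul _) (abs_rpow_mul_exp_neg_mul_abs_sub_le hs · y)
    _ = _ := by
        rw [integral_const_mul, integral_add h_int h_int', integral_const_mul,
          integral_sub_right_eq_self (fun x => |x| ^ s * exp (-c * |x|)),
          integral_sub_right_eq_self (fun x => exp (-c * |x|))]

end LaplaceMoments

noncomputable def interactionIntegrand (α β m ζ x : ℝ) : ℝ :=
  |x| ^ m * exp (-α * max x 0) * exp (-β * max (ζ - x) 0)

theorem integral_interactionIntegrand_sub (α β m x₁ x₂ : ℝ) :
    ∫ x : ℝ, |x - x₁| ^ m * exp (-α * max (x - x₁) 0) * exp (-β * max (x₂ - x) 0) =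
      ∫ x : ℝ, interactionIntegrand α β m (x₂ - x₁) x := by
  rw [← integral_sub_right_eq_self (interactionIntegrand α β m (x₂ - x₁)) x₁]
  simp only [interactionIntegrand, sub_sub_sub_cancel_right]

section InteractionIntegrand

variable {α β m ζ : ℝ}

theorem interactionIntegrand_nonneg (x : ℝ) : 0 ≤ interactionIntegrand α β m ζ x := by
  unfold interactionIntegrand
  positivity

theorem interactionIntegrand_le_of_lt {c : ℝ} (hζ : 0 ≤ ζ) (hc : 0 ≤ c) (hcα : c ≤ α)
    (hcβ : c ≤ β - α) (x : ℝ) :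
    interactionIntegrand α β m ζ x ≤ exp (-α * ζ) * (|x| ^ m * exp (-c * |x - ζ|)) := by
  rw [interactionIntegrand, mul_assoc, ← exp_add, mul_left_comm, ← exp_add]
  refine mul_le_mul_of_nonneg_left (exp_le_exp.2 ?_) (by positivity)
  linarith [mul_add_mul_abs_sub_le_mul_max_add_mul_max hζ hc hcα hcβ x]

theorem interactionIntegrand_le_of_gt {c : ℝ} (hζ : 0 ≤ ζ) (hc : 0 ≤ c) (hcβ : c ≤ β)
    (hcα : c ≤ α - β) (x : ℝ) :
    interactionIntegrand α β m ζ x ≤ exp (-β * ζ) * (|x| ^ m * exp (-c * |x|)) := by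
  -- the case `α < β` after the reflection `x ↦ ζ - x`
  have h := mul_add_mul_abs_sub_le_mul_max_add_mul_max hζ hc hcβ hcα (ζ - x)
  rw [sub_sub_cancel_left, abs_neg, sub_sub_cancel] at h
  rw [interactionIntegrand, mul_assoc, ← exp_add, mul_left_comm, ← exp_add]
  refine mul_le_mul_of_nonneg_left (exp_le_exp.2 ?_) (by positivity)
  linarith

theorem interactionIntegrand_self_le (hζ : 0 ≤ ζ) (hm : 0 ≤ m) (x : ℝ) :
    interactionIntegrand α α m ζ x ≤ exp (-α * ζ) *
      ((Icc 0 ζ).indicator (fun _ => ζ ^ m) x + |x| ^ m * exp (-α * |x|) +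
        |x| ^ m * exp (-α * |x - ζ|)) := by
  have h_ind : 0 ≤ (Icc 0 ζ).indicator (fun _ => ζ ^ m) x :=
    indicator_nonneg (fun y hy => rpow_nonneg (hy.1.trans hy.2) m) x
  have h_left : 0 ≤ |x| ^ m * exp (-α * |x|) := by positivity
  have h_right : 0 ≤ |x| ^ m * exp (-α * |x - ζ|) := by positivity
  rw [interactionIntegrand, mul_assoc, ← exp_add]
  rcases le_total x 0 with hx | hx
  · calc |x| ^ m * exp (-α * max x 0 + -α * max (ζ - x) 0)
        = exp (-α * ζ) * (|x| ^ m * exp (-α * |x|)) := by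
          rw [mul_left_comm, ← exp_add, max_eq_right hx, max_eq_left (by linarith),
            abs_of_nonpos hx]
          ring_nf
      _ ≤ _ := by gcongr; linarith
  rcases le_total x ζ with hxζ | hxζ
  · calc |x| ^ m * exp (-α * max x 0 + -α * max (ζ - x) 0)
        ≤ exp (-α * ζ) * (Icc 0 ζ).indicator (fun _ => ζ ^ m) x := by
          rw [indicator_of_mem (mem_Icc.2 ⟨hx, hxζ⟩), mul_comm, max_eq_left hx,
            max_eq_left (by linarith), abs_of_nonneg hx]
          ring_nf
          gcongr
      _ ≤ _ := by gcongr; linarith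
  · calc |x| ^ m * exp (-α * max x 0 + -α * max (ζ - x) 0)
        = exp (-α * ζ) * (|x| ^ m * exp (-α * |x - ζ|)) := by
          rw [mul_left_comm, ← exp_add, max_eq_left hx, max_eq_right (by linarith),
            abs_of_nonneg (by linarith : 0 ≤ x - ζ)]
          ring_nf
      _ ≤ _ := by gcongr; linarith

theorem exists_integral_interactionIntegrand_le_of_lt (hα : 0 < α) (hm : 0 ≤ m) (hαβ : α < β) :
    ∃ K > 0, ∀ ζ, 0 ≤ ζ →
      ∫ x : ℝ, interactionIntegrand α β m ζ x ≤ K * ((1 + ζ ^ m) * exp (-α * ζ)) := by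
  set c := min α (β - α)
  have hc : 0 < c := lt_min hα (sub_pos.2 hαβ)
  set Iₘ := ∫ x : ℝ, |x| ^ m * exp (-c * |x|)
  set I₀ := ∫ x : ℝ, exp (-c * |x|)
  have hIₘ : 0 ≤ Iₘ := integral_nonneg fun x => by positivity
  have hI₀ : 0 ≤ I₀ := integral_nonneg fun x => by positivity
  refine ⟨2 ^ m * (Iₘ + I₀) + 1, by positivity, fun ζ hζ => ?_⟩
  have hζm : 0 ≤ ζ ^ m := rpow_nonneg hζ m
  calc ∫ x : ℝ, interactionIntegrand α β m ζ x
      ≤ ∫ x : ℝ, exp (-α * ζ) * (|x| ^ m * exp (-c * |x - ζ|)) :=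
        integral_mono_of_nonneg (.of_forall interactionIntegrand_nonneg)
          ((integrable_abs_rpow_mul_exp_neg_mul_abs_sub hc hm ζ).const_mul _)
          (.of_forall (interactionIntegrand_le_of_lt hζ hc.le (min_le_left _ _) (min_le_right _ _)))
    _ ≤ exp (-α * ζ) * (2 ^ m * (Iₘ + ζ ^ m * I₀)) := by
        rw [integral_const_mul]
        gcongr
        simpa only [abs_of_nonneg hζ] using integral_abs_rpow_mul_exp_neg_mul_abs_sub_le hc hm ζ
    _ ≤ (2 ^ m * (Iₘ + I₀) + 1) * ((1 + ζ ^ m) * exp (-α * ζ)) := by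
        have h : 2 ^ m * (Iₘ + ζ ^ m * I₀) ≤ (2 ^ m * (Iₘ + I₀) + 1) * (1 + ζ ^ m) := by
          have h2 : 0 ≤ (2 : ℝ) ^ m := by positivity
          nlinarith [mul_nonneg h2 hIₘ, mul_nonneg h2 hI₀, mul_nonneg (mul_nonneg h2 hIₘ) hζm]
        linarith [mul_le_mul_of_nonneg_left h (exp_pos (-α * ζ)).le]

theorem exists_integral_interactionIntegrand_le_of_gt (hβ : 0 < β) (hm : 0 ≤ m) (hβα : β < α) :
    ∃ K > 0, ∀ ζ, 0 ≤ ζ → ∫ x : ℝ, interactionIntegrand α β m ζ x ≤ K * exp (-β * ζ) := by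
  set c := min β (α - β)
  have hc : 0 < c := lt_min hβ (sub_pos.2 hβα)
  set Iₘ := ∫ x : ℝ, |x| ^ m * exp (-c * |x|)
  have hIₘ : 0 ≤ Iₘ := integral_nonneg fun x => by positivity
  refine ⟨Iₘ + 1, by positivity, fun ζ hζ => ?_⟩
  calc ∫ x : ℝ, interactionIntegrand α β m ζ x
      ≤ ∫ x : ℝ, exp (-β * ζ) * (|x| ^ m * exp (-c * |x|)) :=
        integral_mono_of_nonneg (.of_forall interactionIntegrand_nonneg)
          ((integrable_abs_rpow_mul_exp_neg_mul_abs hc (by linarith)).const_mul _)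
          (.of_forall (interactionIntegrand_le_of_gt hζ hc.le (min_le_left _ _) (min_le_right _ _)))
    _ = Iₘ * exp (-β * ζ) := by rw [integral_const_mul, mul_comm]
    _ ≤ (Iₘ + 1) * exp (-β * ζ) := by gcongr; linarith

theorem exists_integral_interactionIntegrand_self_le (hα : 0 < α) (hm : 0 ≤ m) :
    ∃ K > 0, ∀ ζ, 0 ≤ ζ →
      ∫ x : ℝ, interactionIntegrand α α m ζ x ≤ K * ((1 + ζ ^ (m + 1)) * exp (-α * ζ)) := by
  set Iₘ := ∫ x : ℝ, |x| ^ m * exp (-α * |x|)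
  set I₀ := ∫ x : ℝ, exp (-α * |x|)
  have hIₘ : 0 ≤ Iₘ := integral_nonneg fun x => by positivity
  have hI₀ : 0 ≤ I₀ := integral_nonneg fun x => by positivity
  refine ⟨1 + Iₘ + 2 ^ m * (Iₘ + I₀), by positivity, fun ζ hζ => ?_⟩
  have h_ind : Integrable ((Icc 0 ζ).indicator fun _ => ζ ^ m) :=
    (integrable_indicator_iff measurableSet_Icc).2 (integrableOn_const measure_Icc_lt_top.ne)
  have h_left := integrable_abs_rpow_mul_exp_neg_mul_abs hα (s := m) (by linarith)
  have h_right := integrable_abs_rpow_mul_exp_neg_mul_abs_sub hα hm ζ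
  have h_ind_left : Integrable fun x =>
      (Icc 0 ζ).indicator (fun _ => ζ ^ m) x + |x| ^ m * exp (-α * |x|) := h_ind.add h_left
  have h_vol : volume.real (Icc 0 ζ) • ζ ^ m = ζ ^ (m + 1) := by
    rw [Real.volume_real_Icc_of_le hζ, sub_zero, smul_eq_mul, rpow_add_one' hζ (by linarith),
      mul_comm]
  calc ∫ x : ℝ, interactionIntegrand α α m ζ x
      ≤ ∫ x : ℝ, exp (-α * ζ) * ((Icc 0 ζ).indicator (fun _ => ζ ^ m) x +
          |x| ^ m * exp (-α * |x|) + |x| ^ m * exp (-α * |x - ζ|)) :=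
        integral_mono_of_nonneg (.of_forall interactionIntegrand_nonneg)
          ((h_ind_left.add h_right).const_mul _)
          (.of_forall (interactionIntegrand_self_le hζ hm))
    _ ≤ exp (-α * ζ) * (ζ ^ (m + 1) + Iₘ + 2 ^ m * (Iₘ + ζ ^ m * I₀)) := by
        rw [integral_const_mul, integral_add h_ind_left h_right, integral_add h_ind h_left,
          integral_indicator_const _ measurableSet_Icc, h_vol]
        gcongr
        simpa only [abs_of_nonneg hζ] using integral_abs_rpow_mul_exp_neg_mul_abs_sub_le hα hm ζ
    _ ≤ (1 + Iₘ + 2 ^ m * (Iₘ + I₀)) * ((1 + ζ ^ (m + 1)) * exp (-α * ζ)) := by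
        have hζm := rpow_le_one_add_rpow_add_one hζ hm
        have h : ζ ^ (m + 1) + Iₘ + 2 ^ m * (Iₘ + ζ ^ m * I₀) ≤
            (1 + Iₘ + 2 ^ m * (Iₘ + I₀)) * (1 + ζ ^ (m + 1)) := by
          have h2 : 0 ≤ (2 : ℝ) ^ m := by positivity
          nlinarith [mul_nonneg h2 hIₘ, mul_nonneg h2 hI₀, rpow_nonneg hζ (m + 1),
            mul_nonneg (mul_nonneg h2 hIₘ) (rpow_nonneg hζ (m + 1))]
        linarith [mul_le_mul_of_nonneg_left h (exp_pos (-α * ζ)).le]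

end InteractionIntegrand

/-- **Interaction integral estimates.**
For `x₁ < x₂` with `ζ = x₂ - x₁ > 0` and `α, β, m > 0`:
if `α ≠ β` then `∫_ℝ |x-x₁|^m e^{-α(x-x₁)₊} e^{-β(x₂-x)₊} dx
  ≤ K(α,β,m)·max((1+ζ^m)e^{-αζ}, e^{-βζ})`,
and if `α = β` then the integral is `≤ K(α,m)·(1+ζ^{m+1})·e^{-αζ}`.
Here `y₊ = max y 0` denotes the positive part. -/
theorem interaction_integral_estimates :
    (∀ α β m : ℝ, 0 < α → 0 < β → 0 < m → α ≠ β →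
      ∃ K : ℝ, 0 < K ∧
        ∀ x₁ x₂ : ℝ, 0 < x₂ - x₁ →
          (∫ x : ℝ, |x - x₁| ^ m * Real.exp (-α * max (x - x₁) 0) *
              Real.exp (-β * max (x₂ - x) 0)) ≤
            K * max ((1 + (x₂ - x₁) ^ m) * Real.exp (-α * (x₂ - x₁)))
              (Real.exp (-β * (x₂ - x₁)))) ∧
    (∀ α m : ℝ, 0 < α → 0 < m →
      ∃ K : ℝ, 0 < K ∧
        ∀ x₁ x₂ : ℝ, 0 < x₂ - x₁ →
          (∫ x : ℝ, |x - x₁| ^ m * Real.exp (-α * max (x - x₁) 0) *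
              Real.exp (-α * max (x₂ - x) 0)) ≤
            K * ((1 + (x₂ - x₁) ^ (m + 1)) * Real.exp (-α * (x₂ - x₁)))) := by
  refine ⟨fun α β m hα hβ hm hαβ => ?_, fun α m hα hm => ?_⟩
  · rcases hαβ.lt_or_gt with hlt | hgt
    · obtain ⟨K, hK, h⟩ := exists_integral_interactionIntegrand_le_of_lt hα hm.le hlt
      refine ⟨K, hK, fun x₁ x₂ hζ => ?_⟩
      rw [integral_interactionIntegrand_sub]
      exact (h _ hζ.le).trans (by gcongr; exact le_max_left _ _)
    · obtain ⟨K, hK, h⟩ := exists_integral_interactionIntegrand_le_of_gt hβ hm.le hgt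
      refine ⟨K, hK, fun x₁ x₂ hζ => ?_⟩
      rw [integral_interactionIntegrand_sub]
      exact (h _ hζ.le).trans (by gcongr; exact le_max_right _ _)
  · obtain ⟨K, hK, h⟩ := exists_integral_interactionIntegrand_self_le hα hm.le
    refine ⟨K, hK, fun x₁ x₂ hζ => ?_⟩
    rw [integral_interactionIntegrand_sub]
    exact h _ hζ.le
end

section
/- Let ω, C, v > 0 and define d(t) = (1/√ω)·ln(√C·cosh(√ω v t)/(ω^{1/4} v)). Then d is an even smooth function satisfying d̈(t) = C·e^{−2√ω d(t)} for all t ∈ ℝ, ḋ(t) = v·tanh(√ω v t) (so |ḋ(t)| ≤ v for all t), and for every integer l ≥ 2 there is a constant K_l > 0, independent of v, such that |d^{(l)}(t)| ≤ K_l·v^l·e^{−2√ω v|t|} for all t ∈ ℝ. -/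
open Real

noncomputable section

/-- The distance function `d(t) = (1/√ω)·ln(√C·cosh(√ω v t)/(ω^{1/4} v))`. -/
def dFun (ω C v t : ℝ) : ℝ :=
  (1 / Real.sqrt ω) *
    Real.log (Real.sqrt C * Real.cosh (Real.sqrt ω * v * t) / (ω ^ ((1 : ℝ) / 4) * v))


lemma tanh_hasDerivAt (x : ℝ) : HasDerivAt Real.tanh (1 - Real.tanh x ^ 2) x := by
  have heq : Real.tanh = fun y => Real.sinh y / Real.cosh y :=
    funext fun y => Real.tanh_eq_sinh_div_cosh y
  have h := (Real.hasDerivAt_sinh x).div (Real.hasDerivAt_cosh x) (Real.cosh_pos x).ne'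
  rw [heq]
  refine h.congr_deriv ?_
  have h1 : Real.cosh x ≠ 0 := (Real.cosh_pos x).ne'
  have h2 : Real.cosh x ^ 2 - Real.sinh x ^ 2 = 1 := Real.cosh_sq_sub_sinh_sq x
  field_simp

lemma contDiff_tanh : ContDiff ℝ (⊤ : ℕ∞) Real.tanh := by
  have heq : Real.tanh = fun y => Real.sinh y / Real.cosh y :=
    funext fun y => Real.tanh_eq_sinh_div_cosh y
  rw [heq]
  exact Real.contDiff_sinh.div Real.contDiff_cosh fun x => (Real.cosh_pos x).ne'

lemma abs_tanh_le_one (x : ℝ) : |Real.tanh x| ≤ 1 := by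
  rw [Real.tanh_eq_sinh_div_cosh, abs_div, abs_of_pos (Real.cosh_pos x),
    div_le_one (Real.cosh_pos x)]
  rw [Real.abs_sinh, ← Real.cosh_abs x]
  nlinarith [Real.cosh_sub_sinh |x|, Real.exp_pos (-|x|)]

lemma one_sub_tanh_sq (x : ℝ) : 1 - Real.tanh x ^ 2 = 1 / Real.cosh x ^ 2 := by
  have h1 : Real.cosh x ≠ 0 := (Real.cosh_pos x).ne'
  rw [Real.tanh_eq_sinh_div_cosh]
  have h2 : Real.cosh x ^ 2 - Real.sinh x ^ 2 = 1 := Real.cosh_sq_sub_sinh_sq x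
  field_simp
  linarith [h2]


lemma sech_sq_bound (x : ℝ) : 1 - Real.tanh x ^ 2 ≤ 4 * Real.exp (-2 * |x|) := by
  rw [one_sub_tanh_sq]
  have hc : Real.exp |x| / 2 ≤ Real.cosh x := by
    rw [← Real.cosh_abs, Real.cosh_eq]
    have := Real.exp_pos (-|x|); linarith
  have hc2 : (Real.exp |x| / 2) ^ 2 ≤ Real.cosh x ^ 2 := by
    have := Real.exp_pos |x|; nlinarith
  have h0 : (0:ℝ) < (Real.exp |x| / 2) ^ 2 := by positivity
  calc 1 / Real.cosh x ^ 2 ≤ 1 / ((Real.exp |x| / 2) ^ 2) := by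
        apply one_div_le_one_div_of_le h0 hc2
    _ = 4 * Real.exp (-2 * |x|) := by
        rw [div_pow]
        rw [show Real.exp |x| ^ 2 = Real.exp (2 * |x|) by
          rw [← Real.exp_nat_mul]; norm_num [mul_comm]]
        rw [show (-2:ℝ) * |x| = -(2*|x|) by ring, Real.exp_neg]
        have := Real.exp_pos (2*|x|)
        field_simp
        norm_num

lemma tanh_iter_poly (m : ℕ) : ∃ p : Polynomial ℝ,
    iteratedDeriv (m + 1) Real.tanh = fun s => p.eval (Real.tanh s) * (1 - Real.tanh s ^ 2) := by
  induction m with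
  | zero =>
    refine ⟨1, funext fun s => ?_⟩
    rw [iteratedDeriv_one, (tanh_hasDerivAt s).deriv]
    simp
  | succ m ih =>
    obtain ⟨p, hp⟩ := ih
    refine ⟨p.derivative * (1 - Polynomial.X ^ 2) - Polynomial.C 2 * Polynomial.X * p,
      funext fun s => ?_⟩
    rw [iteratedDeriv_succ, hp]
    have h1 : HasDerivAt (fun s => Polynomial.eval (Real.tanh s) p * (1 - Real.tanh s ^ 2))
        (Polynomial.eval (Real.tanh s) p.derivative * (1 - Real.tanh s ^ 2)
          * (1 - Real.tanh s ^ 2)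
          + Polynomial.eval (Real.tanh s) p * (-(2 * Real.tanh s * (1 - Real.tanh s ^ 2)))) s := by
      have hpoly : HasDerivAt (fun s => Polynomial.eval (Real.tanh s) p)
          (Polynomial.eval (Real.tanh s) p.derivative * (1 - Real.tanh s ^ 2)) s :=
        (p.hasDerivAt (Real.tanh s)).comp s (tanh_hasDerivAt s)
      have hsq : HasDerivAt (fun s => 1 - Real.tanh s ^ 2)
          (-(2 * Real.tanh s * (1 - Real.tanh s ^ 2))) s := by
        have := ((tanh_hasDerivAt s).pow 2).const_sub 1
        refine this.congr_deriv ?_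
        push_cast
        ring
      exact hpoly.mul hsq
    rw [h1.deriv]
    simp [Polynomial.eval_mul, Polynomial.eval_sub, Polynomial.eval_pow]
    ring

lemma tanh_iter_bound (m : ℕ) : ∃ K : ℝ, 0 < K ∧ ∀ s : ℝ,
    |iteratedDeriv (m + 1) Real.tanh s| ≤ K * Real.exp (-2 * |s|) := by
  obtain ⟨p, hp⟩ := tanh_iter_poly m
  obtain ⟨M, hM⟩ := (isCompact_Icc (a := (-1:ℝ)) (b := 1)).exists_bound_of_continuousOn
    p.continuous_aeval.continuousOn
  refine ⟨4 * (|M| + 1), by positivity, fun s => ?_⟩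
  have htanh : Real.tanh s ∈ Set.Icc (-1:ℝ) 1 := by
    have := abs_tanh_le_one s
    constructor <;> [linarith [abs_le.mp this |>.1]; linarith [abs_le.mp this |>.2]]
  have hev : |Polynomial.eval (Real.tanh s) p| ≤ |M| + 1 := by
    have := hM _ htanh
    simp only [Polynomial.aeval_def, Polynomial.eval₂_eq_eval_map, Polynomial.map_id] at this
    calc |Polynomial.eval (Real.tanh s) p| ≤ M := by
          simpa [Real.norm_eq_abs] using this
      _ ≤ |M| + 1 := by have := le_abs_self M; linarith
  have hpos : 0 ≤ 1 - Real.tanh s ^ 2 := by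
    have := abs_tanh_le_one s
    nlinarith [abs_le.mp this |>.1, abs_le.mp this |>.2]
  rw [hp]
  calc |Polynomial.eval (Real.tanh s) p * (1 - Real.tanh s ^ 2)|
      = |Polynomial.eval (Real.tanh s) p| * (1 - Real.tanh s ^ 2) := by
        rw [abs_mul, abs_of_nonneg hpos]
    _ ≤ (|M| + 1) * (4 * Real.exp (-2 * |s|)) := by
        apply mul_le_mul hev (sech_sq_bound s) hpos (by positivity)
    _ = 4 * (|M| + 1) * Real.exp (-2 * |s|) := by ring


variable {ω C v : ℝ}

lemma A_pos (hω : 0 < ω) (hv : 0 < v) : 0 < ω ^ ((1:ℝ)/4) * v :=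
  mul_pos (Real.rpow_pos_of_pos hω _) hv

lemma G_pos (hω : 0 < ω) (hC : 0 < C) (hv : 0 < v) (t : ℝ) :
    0 < Real.sqrt C * Real.cosh (Real.sqrt ω * v * t) / (ω ^ ((1:ℝ)/4) * v) :=
  div_pos (mul_pos (Real.sqrt_pos.mpr hC) (Real.cosh_pos _)) (A_pos hω hv)

lemma dFun_eq (hω : 0 < ω) (hC : 0 < C) (hv : 0 < v) :
    dFun ω C v = fun t => (1 / Real.sqrt ω) * Real.log (Real.cosh (Real.sqrt ω * v * t))
      + (1 / Real.sqrt ω) * Real.log (Real.sqrt C / (ω ^ ((1:ℝ)/4) * v)) := by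
  funext t
  unfold dFun
  rw [show Real.sqrt C * Real.cosh (Real.sqrt ω * v * t) / (ω ^ ((1:ℝ)/4) * v)
      = Real.cosh (Real.sqrt ω * v * t) * (Real.sqrt C / (ω ^ ((1:ℝ)/4) * v)) by ring,
    Real.log_mul (Real.cosh_pos _).ne'
      (div_pos (Real.sqrt_pos.mpr hC) (A_pos hω hv)).ne']
  ring

lemma dFun_hasDerivAt (hω : 0 < ω) (hC : 0 < C) (hv : 0 < v) (t : ℝ) :
    HasDerivAt (dFun ω C v) (v * Real.tanh (Real.sqrt ω * v * t)) t := by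
  rw [dFun_eq hω hC hv]
  set c := Real.sqrt ω * v with hc
  have h1 : HasDerivAt (fun t : ℝ => c * t) c t := by
    simpa using (hasDerivAt_id t).const_mul c
  have h2 : HasDerivAt (fun t => Real.cosh (c * t)) (Real.sinh (c * t) * c) t :=
    (Real.hasDerivAt_cosh (c * t)).comp t h1
  have h3 : HasDerivAt (fun t => Real.log (Real.cosh (c * t)))
      (Real.sinh (c * t) * c / Real.cosh (c * t)) t :=
    h2.log (Real.cosh_pos _).ne'
  have h4 := (HasDerivAt.const_mul (1 / Real.sqrt ω) h3).add_const
    ((1 / Real.sqrt ω) * Real.log (Real.sqrt C / (ω ^ ((1:ℝ)/4) * v)))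
  refine h4.congr_deriv ?_
  have hs : Real.sqrt ω ≠ 0 := (Real.sqrt_pos.mpr hω).ne'
  have hch : Real.cosh (c * t) ≠ 0 := (Real.cosh_pos _).ne'
  rw [Real.tanh_eq_sinh_div_cosh, hc]
  field_simp

lemma deriv_dFun (hω : 0 < ω) (hC : 0 < C) (hv : 0 < v) :
    deriv (dFun ω C v) = fun t => v * Real.tanh (Real.sqrt ω * v * t) :=
  funext fun t => (dFun_hasDerivAt hω hC hv t).deriv

lemma contDiff_dFun (hω : 0 < ω) (hC : 0 < C) (hv : 0 < v) :
    ContDiff ℝ (⊤ : ℕ∞) (dFun ω C v) := by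
  unfold dFun
  exact contDiff_const.mul (((contDiff_const.mul (Real.contDiff_cosh.comp
    (contDiff_const.mul contDiff_id))).div_const _).log
    (fun t => (G_pos hω hC hv t).ne'))

lemma deriv2_dFun (hω : 0 < ω) (hC : 0 < C) (hv : 0 < v) (t : ℝ) :
    deriv (deriv (dFun ω C v)) t = C * Real.exp (-2 * Real.sqrt ω * dFun ω C v t) := by
  rw [deriv_dFun hω hC hv]
  set c := Real.sqrt ω * v with hc
  have h1 : HasDerivAt (fun t : ℝ => c * t) c t := by
    simpa using (hasDerivAt_id t).const_mul c
  have h2 : HasDerivAt (fun t => v * Real.tanh (c * t))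
      (v * ((1 - Real.tanh (c * t) ^ 2) * c)) t :=
    HasDerivAt.const_mul v ((tanh_hasDerivAt (c * t)).comp t h1)
  rw [h2.deriv]
  have hG := G_pos hω hC hv t
  have hs : (0:ℝ) < Real.sqrt ω := Real.sqrt_pos.mpr hω
  have hlog : -2 * Real.sqrt ω * dFun ω C v t
      = Real.log ((Real.sqrt C * Real.cosh (c * t) / (ω ^ ((1:ℝ)/4) * v))⁻¹ ^ 2) := by
    rw [Real.log_pow, Real.log_inv]
    unfold dFun
    push_cast
    rw [← hc]
    field_simp
  rw [hlog, Real.exp_log (by positivity)]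
  rw [one_sub_tanh_sq]
  have hA2 : (ω ^ ((1:ℝ)/4)) ^ 2 = Real.sqrt ω := by
    rw [← Real.rpow_natCast (ω ^ ((1:ℝ)/4)) 2, ← Real.rpow_mul hω.le, Real.sqrt_eq_rpow]
    norm_num
  have hsC : Real.sqrt C ^ 2 = C := Real.sq_sqrt hC.le
  have hch : Real.cosh (c * t) ≠ 0 := (Real.cosh_pos _).ne'
  have hA : ω ^ ((1:ℝ)/4) * v ≠ 0 := (A_pos hω hv).ne'
  have key : ((Real.sqrt C * Real.cosh (c * t) / (ω ^ ((1:ℝ)/4) * v))⁻¹) ^ 2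
      = Real.sqrt ω * v ^ 2 / (C * Real.cosh (c * t) ^ 2) := by
    rw [inv_pow, div_pow, mul_pow, mul_pow, hsC, hA2]
    rw [inv_div]
  rw [key]
  have hCne : C ≠ 0 := hC.ne'
  field_simp
  ring

lemma iteratedDeriv_const_mul' (n : ℕ) (v : ℝ) {f : ℝ → ℝ} (hf : ContDiff ℝ (⊤ : ℕ∞) f) :
    iteratedDeriv n (fun s => v * f s) = fun s => v * iteratedDeriv n f s := by
  funext s
  simp_rw [← iteratedDerivWithin_univ]
  exact iteratedDerivWithin_const_mul (Set.mem_univ s) uniqueDiffOn_univ v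
    ((hf.of_le (by exact_mod_cast le_top)).contDiffWithinAt)

lemma iteratedDeriv_dFun (hω : 0 < ω) (hC : 0 < C) (hv : 0 < v) (m : ℕ) (t : ℝ) :
    iteratedDeriv (m + 2) (dFun ω C v) t
      = Real.sqrt ω ^ (m + 1) * v ^ (m + 2)
        * iteratedDeriv (m + 1) Real.tanh (Real.sqrt ω * v * t) := by
  rw [show m + 2 = (m + 1) + 1 from rfl, iteratedDeriv_succ', deriv_dFun hω hC hv]
  have hcd : ContDiff ℝ (m+1 : ℕ) (fun s => v * Real.tanh s) :=
    (contDiff_const.mul contDiff_tanh).of_le (by exact_mod_cast le_top)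
  have := iteratedDeriv_comp_const_mul hcd (Real.sqrt ω * v)
  rw [show (fun t => v * Real.tanh (Real.sqrt ω * v * t))
      = fun x => (fun s => v * Real.tanh s) (Real.sqrt ω * v * x) from rfl, this,
    iteratedDeriv_const_mul' (m+1) v contDiff_tanh]
  ring


/-- **Properties of the distance function `d`.**
For `ω, C, v > 0`, the function `d(t) = (1/√ω)·ln(√C·cosh(√ω v t)/(ω^{1/4} v))` is even,
smooth, satisfies `d̈(t) = C·e^{-2√ω d(t)}` and `ḋ(t) = v·tanh(√ω v t)` (hence `|ḋ(t)| ≤ v`),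
and for every `l ≥ 2` there is a constant `K_l > 0`, independent of `v`, with
`|d^{(l)}(t)| ≤ K_l·v^l·e^{-2√ω v |t|}` for all `t`. -/
theorem dFun_properties (ω C : ℝ) (hω : 0 < ω) (hC : 0 < C) :
    (∀ v : ℝ, 0 < v →
      (∀ t : ℝ, dFun ω C v (-t) = dFun ω C v t) ∧
      ContDiff ℝ (⊤ : ℕ∞) (dFun ω C v) ∧
      (∀ t : ℝ, deriv (deriv (dFun ω C v)) t = C * Real.exp (-2 * Real.sqrt ω * dFun ω C v t)) ∧
      (∀ t : ℝ, deriv (dFun ω C v) t = v * Real.tanh (Real.sqrt ω * v * t)) ∧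
      (∀ t : ℝ, |deriv (dFun ω C v) t| ≤ v)) ∧
    (∀ l : ℕ, 2 ≤ l → ∃ K : ℝ, 0 < K ∧ ∀ v : ℝ, 0 < v → ∀ t : ℝ,
      |iteratedDeriv l (dFun ω C v) t| ≤ K * v ^ l * Real.exp (-2 * Real.sqrt ω * v * |t|)) := by
  constructor
  · intro v hv
    refine ⟨fun t => by simp [dFun, mul_neg, Real.cosh_neg],
      contDiff_dFun hω hC hv, deriv2_dFun hω hC hv,
      fun t => by rw [deriv_dFun hω hC hv],
      fun t => ?_⟩
    rw [deriv_dFun hω hC hv]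
    calc |v * Real.tanh (Real.sqrt ω * v * t)| = v * |Real.tanh (Real.sqrt ω * v * t)| := by
          rw [abs_mul, abs_of_pos hv]
      _ ≤ v * 1 := mul_le_mul_of_nonneg_left (abs_tanh_le_one _) hv.le
      _ = v := mul_one v
  · intro l hl
    obtain ⟨m, rfl⟩ : ∃ m, l = m + 2 := ⟨l - 2, by omega⟩
    obtain ⟨K, hK, hKb⟩ := tanh_iter_bound m
    have hs : (0:ℝ) < Real.sqrt ω := Real.sqrt_pos.mpr hω
    refine ⟨K * Real.sqrt ω ^ (m + 1), by positivity, fun v hv t => ?_⟩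
    rw [iteratedDeriv_dFun hω hC hv m t]
    have habs : |Real.sqrt ω * v * t| = Real.sqrt ω * v * |t| := by
      rw [abs_mul, abs_of_pos (mul_pos hs hv)]
    calc |Real.sqrt ω ^ (m + 1) * v ^ (m + 2)
          * iteratedDeriv (m + 1) Real.tanh (Real.sqrt ω * v * t)|
        = Real.sqrt ω ^ (m + 1) * v ^ (m + 2)
          * |iteratedDeriv (m + 1) Real.tanh (Real.sqrt ω * v * t)| := by
          rw [abs_mul, abs_of_pos (by positivity)]
      _ ≤ Real.sqrt ω ^ (m + 1) * v ^ (m + 2)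
          * (K * Real.exp (-2 * |Real.sqrt ω * v * t|)) := by
          exact mul_le_mul_of_nonneg_left (hKb _) (by positivity)
      _ = K * Real.sqrt ω ^ (m + 1) * v ^ (m + 2)
          * Real.exp (-2 * Real.sqrt ω * v * |t|) := by
          rw [habs]; ring_nf

end
end

section
/- Assume (H1)–(H4) for ω>0. Then the kernel of the operator S_ω on L²(ℝ,ℂ) (viewed as a real Hilbert space) is exactly the real span of φ'_ω and i·φ_ω: ker S_ω = span_ℝ{φ'_ω, iφ_ω}. -/
open MeasureTheory Real Complex Set Filter
open scoped ComplexConjugate Topology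

noncomputable section

/-- Hypothesis (H1): `F(0) = 0` and `F'(0) = 0`. -/
def SatisfiesH1 (F : Polynomial ℝ) : Prop :=
  F.eval 0 = 0 ∧ F.derivative.eval 0 = 0

/-- The effective potential `T_ω(y) = -ω y²/2 + F(y²)/2`. -/
def Tfun (F : Polynomial ℝ) (ω y : ℝ) : ℝ := -ω * y ^ 2 / 2 + F.eval (y ^ 2) / 2

/-- Hypotheses (H2)+(H3) (Berestycki–Lions conditions) at frequency `ω`. -/
def SatisfiesH23 (F : Polynomial ℝ) (ω : ℝ) : Prop :=
  ∃ y₀ : ℝ, 0 < y₀ ∧ Tfun F ω y₀ = 0 ∧ 0 < deriv (Tfun F ω) y₀ ∧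
    ∀ y : ℝ, y₀ < y → 0 < Tfun F ω y

/-- `φ` is the ground-state soliton with frequency `ω`: positive, even, smooth,
solving `φ'' = ωφ - F'(φ²)φ`, with exponential decay of all derivatives. -/
def IsSoliton (F : Polynomial ℝ) (ω : ℝ) (φ : ℝ → ℝ) : Prop :=
  (∀ x, 0 < φ x) ∧ (∀ x, φ (-x) = φ x) ∧ ContDiff ℝ (⊤ : ℕ∞) φ ∧
    (∀ x, deriv (deriv φ) x = ω * φ x - F.derivative.eval (φ x ^ 2) * φ x) ∧
    ∀ l : ℕ, ∃ C : ℝ, 0 < C ∧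
      ∀ x : ℝ, |iteratedDeriv l φ x| ≤ C * Real.exp (-Real.sqrt ω * |x|)

/-- Hypothesis (H4): the mass `ω ↦ ∫ φ_ω²` is strictly increasing at `ω`. -/
def SatisfiesH4 (φfam : ℝ → ℝ → ℝ) (ω : ℝ) : Prop :=
  ∃ m : ℝ, 0 < m ∧ HasDerivAt (fun w : ℝ => ∫ x : ℝ, φfam w x ^ 2) m ω

/-- The real inner product on `L²(ℝ,ℂ)`: `⟨f,g⟩ = Re ∫ f·conj g`. -/
def rinner (f g : ℝ → ℂ) : ℝ := ∫ x : ℝ, (f x * conj (g x)).re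

/-- The linearized operator
`S_ω(ρ) = -ρ'' + ωρ - F'(φ_ω²)ρ - F''(φ_ω²)φ_ω²(ρ + conj ρ)`. -/
def Sop (F : Polynomial ℝ) (ω : ℝ) (φ : ℝ → ℝ) (ρ : ℝ → ℂ) (x : ℝ) : ℂ :=
  -iteratedDeriv 2 ρ x + (ω : ℂ) * ρ x - ((F.derivative.eval (φ x ^ 2) : ℝ) : ℂ) * ρ x -
    ((F.derivative.derivative.eval (φ x ^ 2) * φ x ^ 2 : ℝ) : ℂ) * (ρ x + conj (ρ x))

end

noncomputable section


lemma my_integrable_exp_neg_mul_abs {b : ℝ} (hb : 0 < b) :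
    Integrable (fun x : ℝ => Real.exp (-b * |x|)) := by
  have hIoi : IntegrableOn (fun x : ℝ => Real.exp (-b * |x|)) (Ici 0) := by
    rw [integrableOn_Ici_iff_integrableOn_Ioi]
    refine (exp_neg_integrableOn_Ioi 0 hb).congr_fun ?_ measurableSet_Ioi
    intro x hx
    simp [_root_.abs_of_nonneg (le_of_lt (mem_Ioi.mp hx))]
  rw [← integrableOn_univ, ← @Iio_union_Ici _ _ (0 : ℝ), integrableOn_union]
  refine ⟨?_, hIoi⟩
  rw [← (Measure.measurePreserving_neg (volume : Measure ℝ)).integrableOn_comp_preimage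
      (Homeomorph.neg ℝ).measurableEmbedding]
  simp only [Function.comp_def, abs_neg, neg_preimage, neg_Iio, neg_zero]
  exact hIoi.mono_set Ioi_subset_Ici_self

lemma my_memL2_of_exp_bound (f : ℝ → ℝ) (hf : Continuous f) {a : ℝ} (C : ℝ) (ha : 0 < a)
    (hbd : ∀ x, |f x| ≤ C * Real.exp (-a * |x|)) : MemLp f 2 volume := by
  have hgc : Continuous fun x : ℝ => C * Real.exp (-a * |x|) :=
    continuous_const.mul ((continuous_const.mul _root_.continuous_abs).rexp)
  have hg : MemLp (fun x : ℝ => C * Real.exp (-a * |x|)) 2 volume := by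
    rw [memLp_two_iff_integrable_sq hgc.aestronglyMeasurable]
    have hfun : (fun x : ℝ => (C * Real.exp (-a * |x|)) ^ 2)
        = fun x : ℝ => C ^ 2 * Real.exp (-(2 * a) * |x|) := by
      funext x
      rw [mul_pow, sq (Real.exp _), ← Real.exp_add]
      ring_nf
    rw [hfun]
    exact (my_integrable_exp_neg_mul_abs (by linarith)).const_mul _
  refine hg.of_le hf.aestronglyMeasurable (Eventually.of_forall fun x => ?_)
  rw [Real.norm_eq_abs, Real.norm_eq_abs]
  exact (hbd x).trans (le_abs_self _)



lemma my_linODE_unique_zero {q : ℝ → ℝ} {Q : ℝ} (hq : ∀ t, |q t| ≤ Q)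
    {z : ℝ → ℝ} (hz : Differentiable ℝ z) (hz' : Differentiable ℝ (deriv z))
    (hode : ∀ x, deriv (deriv z) x = q x * z x)
    {x₀ : ℝ} (h0 : z x₀ = 0) (h0' : deriv z x₀ = 0) : ∀ x, z x = 0 := by
  set K : NNReal := Real.toNNReal (max 1 Q) with hK
  have hK1 : (1 : ℝ) ≤ (K : ℝ) := (le_max_left 1 Q).trans (Real.le_coe_toNNReal _)
  have hKQ : ∀ t, |q t| ≤ (K : ℝ) :=
    fun t => (hq t).trans ((le_max_right 1 Q).trans (Real.le_coe_toNNReal _))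
  set v : ℝ → ℝ × ℝ → ℝ × ℝ := fun t p => (p.2, q t * p.1) with hv
  have hlip : ∀ t, LipschitzWith K (v t) := by
    intro t
    apply LipschitzWith.of_dist_le_mul
    intro p p'
    rw [Prod.dist_eq]
    apply max_le
    · have h2 : dist p.2 p'.2 ≤ dist p p' := by rw [Prod.dist_eq]; exact le_max_right _ _
      exact h2.trans (le_mul_of_one_le_left dist_nonneg hK1)
    · show dist (q t * p.1) (q t * p'.1) ≤ (K : ℝ) * dist p p'
      rw [Real.dist_eq, ← mul_sub, abs_mul]
      calc |q t| * |p.1 - p'.1| ≤ (K : ℝ) * dist p.1 p'.1 := by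
            rw [Real.dist_eq]
            exact mul_le_mul_of_nonneg_right (hKQ t) (abs_nonneg _)
        _ ≤ (K : ℝ) * dist p p' := by
            have h1 : dist p.1 p'.1 ≤ dist p p' := by rw [Prod.dist_eq]; exact le_max_left _ _
            exact mul_le_mul_of_nonneg_left h1 (by linarith)
  set f : ℝ → ℝ × ℝ := fun t => (z t, deriv z t) with hf
  have hf' : ∀ t, HasDerivAt f (v t (f t)) t := by
    intro t
    have h2 : HasDerivAt (deriv z) (q t * z t) t := by
      have := (hz' t).hasDerivAt; rwa [hode t] at this
    exact ((hz t).hasDerivAt).prodMk h2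
  have hg' : ∀ t : ℝ, HasDerivAt (fun _ : ℝ => ((0 : ℝ), (0 : ℝ))) (v t ((0 : ℝ), (0 : ℝ))) t := by
    intro t
    refine (hasDerivAt_const t ((0 : ℝ), (0 : ℝ))).congr_deriv ?_
    simp [hv]
    rfl
  intro x
  rcases le_or_gt x x₀ with hle | hlt
  · -- x ∈ Icc (x-1) (x₀+1), x₀ in interior
    have key := ODE_solution_unique_of_mem_Icc (v := v) (s := fun _ => univ)
      (fun t _ => (hlip t).lipschitzOnWith)
      (t₀ := x₀) (a := x - 1) (b := x₀ + 1)
      ⟨by linarith, by linarith⟩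
      ((hz.continuous.prodMk hz'.continuous).continuousOn)
      (fun t _ => hf' t) (fun _ _ => trivial)
      (continuousOn_const) (fun t _ => hg' t) (fun _ _ => trivial)
      (by show (z x₀, deriv z x₀) = ((0:ℝ),(0:ℝ)); rw [h0, h0'])
    have := key (Set.mem_Icc.mpr ⟨by linarith, by linarith⟩ : x ∈ Icc (x - 1) (x₀ + 1))
    exact congrArg Prod.fst this
  · have key := ODE_solution_unique_of_mem_Icc (v := v) (s := fun _ => univ)
      (fun t _ => (hlip t).lipschitzOnWith)
      (t₀ := x₀) (a := x₀ - 1) (b := x + 1)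
      ⟨by linarith, by linarith⟩
      ((hz.continuous.prodMk hz'.continuous).continuousOn)
      (fun t _ => hf' t) (fun _ _ => trivial)
      (continuousOn_const) (fun t _ => hg' t) (fun _ _ => trivial)
      (by show (z x₀, deriv z x₀) = ((0:ℝ),(0:ℝ)); rw [h0, h0'])
    have := key (Set.mem_Icc.mpr ⟨by linarith, by linarith⟩ : x ∈ Icc (x₀ - 1) (x + 1))
    exact congrArg Prod.fst this




lemma my_integrable_mul_of_L2 {f g : ℝ → ℝ} (hf : MemLp f 2 volume) (hg : MemLp g 2 volume) :
    Integrable (fun x => f x * g x) volume := by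
  have h : MemLp (f • g) 1 volume := hg.smul hf
  rw [← memLp_one_iff_integrable]
  exact h

lemma my_prop_of_L2_solutions {q u w : ℝ → ℝ} {Q : ℝ} (hq : ∀ t, |q t| ≤ Q)
    (hu : ContDiff ℝ (⊤ : ℕ∞) u) (hw : ContDiff ℝ (⊤ : ℕ∞) w)
    (hu2 : ∀ x, deriv (deriv u) x = q x * u x)
    (hw2 : ∀ x, deriv (deriv w) x = q x * w x)
    (huL2 : MemLp u 2 volume) (hwL2 : MemLp w 2 volume)
    (hw'L2 : MemLp (deriv w) 2 volume)
    {x₁ : ℝ} (hx₁ : w x₁ ≠ 0) : ∃ c : ℝ, ∀ x, u x = c * w x := by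
  have hud : Differentiable ℝ u := hu.differentiable (by simp)
  have hwd : Differentiable ℝ w := hw.differentiable (by simp)
  have hud' : Differentiable ℝ (deriv u) :=
    (contDiff_infty_iff_deriv.mp hu).2.differentiable (by simp)
  have hwd' : Differentiable ℝ (deriv w) :=
    (contDiff_infty_iff_deriv.mp hw).2.differentiable (by simp)
  -- the Wronskian is constant
  set W : ℝ → ℝ := fun x => deriv u x * w x - u x * deriv w x with hWdef
  have hW' : ∀ x, HasDerivAt W 0 x := by
    intro x
    have h1 : HasDerivAt (deriv u) (q x * u x) x := by
      have := (hud' x).hasDerivAt; rwa [hu2 x] at this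
    have h2 : HasDerivAt (deriv w) (q x * w x) x := by
      have := (hwd' x).hasDerivAt; rwa [hw2 x] at this
    have h3 : HasDerivAt u (deriv u x) x := (hud x).hasDerivAt
    have h4 : HasDerivAt w (deriv w x) x := (hwd x).hasDerivAt
    have h5 := (h1.mul h4).sub (h3.mul h2)
    refine h5.congr_deriv ?_
    ring
  have hWconst : ∀ x, W x = W x₁ := fun x =>
    is_const_of_deriv_eq_zero (fun y => (hW' y).differentiableAt) (fun y => (hW' y).deriv) x x₁
  -- the Wronskian is zero
  have hCzero : W x₁ = 0 := by
    by_contra hC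
    set C := W x₁ with hCdef
    set h : ℝ → ℝ := fun x => u x * w x with hh
    have hInt : Integrable h volume := my_integrable_mul_of_L2 huL2 hwL2
    set r : ℝ → ℝ := fun x => 2 * (u x * deriv w x) with hr
    have hrInt : Integrable r volume := (my_integrable_mul_of_L2 huL2 hw'L2).const_mul 2
    have hrcont : Continuous r :=
      (continuous_const.mul (hud.continuous.mul hwd'.continuous))
    have hh' : ∀ x, HasDerivAt h (C + r x) x := by
      intro x
      have h5 := ((hud x).hasDerivAt).mul ((hwd x).hasDerivAt)
      have heq : deriv u x * w x + u x * deriv w x = C + 2 * (u x * deriv w x) := by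
        have h6 : deriv u x * w x - u x * deriv w x = C := hWconst x
        linarith
      rw [heq] at h5
      exact h5
    have key : ∀ x : ℝ, h x = h 0 + C * x + ∫ t in (0:ℝ)..x, r t := by
      intro x
      have hft := intervalIntegral.integral_eq_sub_of_hasDerivAt
        (f := h) (f' := fun t => C + r t) (fun t _ => hh' t)
        ((continuous_const.add hrcont).intervalIntegrable 0 x)
      have hft' : (∫ t in (0:ℝ)..x, (C + r t)) = h x - h 0 := hft
      have hsplit : ∫ t in (0:ℝ)..x, (C + r t) = C * x + ∫ t in (0:ℝ)..x, r t := by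
        rw [intervalIntegral.integral_add intervalIntegrable_const
          (hrcont.intervalIntegrable 0 x), intervalIntegral.integral_const]
        have hsm : (x - 0) • C = C * x := by rw [smul_eq_mul]; ring
        rw [hsm]
      rw [hsplit] at hft'
      linarith
    set Rt := ∫ x : ℝ, |r x| with hRt
    have hRt0 : 0 ≤ Rt := integral_nonneg fun x => abs_nonneg _
    have hbound : ∀ x : ℝ, |C| * |x| ≤ |h x| + |h 0| + Rt := by
      intro x
      have h1 : |∫ t in (0:ℝ)..x, r t| ≤ Rt := by
        rw [← Real.norm_eq_abs]
        refine (intervalIntegral.norm_integral_le_integral_norm_uIoc).trans ?_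
        rw [hRt]
        simp only [Real.norm_eq_abs]
        exact setIntegral_le_integral hrInt.abs (Eventually.of_forall fun y => abs_nonneg _)
      have h2 := key x
      have h3 : C * x = h x - h 0 - ∫ t in (0:ℝ)..x, r t := by linarith
      calc |C| * |x| = |C * x| := (abs_mul C x).symm
        _ ≤ |h x| + |h 0| + |∫ t in (0:ℝ)..x, r t| := by
            rw [h3]
            refine abs_le.mpr ⟨?_, ?_⟩ <;>
              [skip; skip] <;>
              nlinarith [le_abs_self (h x), neg_abs_le (h x), le_abs_self (h 0),
                neg_abs_le (h 0), le_abs_self (∫ t in (0:ℝ)..x, r t),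
                neg_abs_le (∫ t in (0:ℝ)..x, r t)]
        _ ≤ |h x| + |h 0| + Rt := by linarith
    have hmark := hInt.measure_norm_ge_lt_top (ε := 1) one_pos
    set R := (1 + |h 0| + Rt) / |C| with hRdef
    have hCpos : 0 < |C| := abs_pos.mpr hC
    have hRpos : 0 < R := div_pos (by positivity) hCpos
    have hsub : Ici R ⊆ {x : ℝ | 1 ≤ ‖h x‖} := by
      intro x hx
      have hxR : R ≤ x := hx
      have hx0 : 0 ≤ x := hRpos.le.trans hxR
      have h4 : 1 + |h 0| + Rt ≤ |C| * x := by
        rw [hRdef, div_le_iff₀ hCpos] at hxR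
        linarith
      have hb := hbound x
      rw [_root_.abs_of_nonneg hx0] at hb
      simp only [mem_setOf_eq, Real.norm_eq_abs]
      linarith
    have hle : (volume : Measure ℝ) (Ici R) ≤ volume {x : ℝ | 1 ≤ ‖h x‖} := measure_mono hsub
    rw [Real.volume_Ici] at hle
    exact absurd (lt_of_le_of_lt hle hmark) (by simp)
  -- conclude proportionality
  refine ⟨u x₁ / w x₁, ?_⟩
  set c := u x₁ / w x₁ with hc
  set z : ℝ → ℝ := fun x => u x - c * w x with hzdef
  have hzd : Differentiable ℝ z := hud.sub (hwd.const_mul c)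
  have hzderiv : deriv z = fun x => deriv u x - c * deriv w x := by
    funext x
    exact (((hud x).hasDerivAt).sub (((hwd x).hasDerivAt).const_mul c)).deriv
  have hzd' : Differentiable ℝ (deriv z) := by
    rw [hzderiv]; exact hud'.sub (hwd'.const_mul c)
  have hzode : ∀ x, deriv (deriv z) x = q x * z x := by
    intro x
    rw [hzderiv]
    have h1 : HasDerivAt (deriv u) (q x * u x) x := by
      have := (hud' x).hasDerivAt; rwa [hu2 x] at this
    have h2 : HasDerivAt (deriv w) (q x * w x) x := by
      have := (hwd' x).hasDerivAt; rwa [hw2 x] at this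
    have h5 := h1.sub (h2.const_mul c)
    rw [show (fun x => deriv u x - c * deriv w x) = (deriv u - fun y => c * deriv w y) from rfl, h5.deriv, hzdef]
    ring
  have hz1 : z x₁ = 0 := by
    rw [hzdef]
    simp only
    rw [hc]
    field_simp
    ring
  have hz1' : deriv z x₁ = 0 := by
    rw [hzderiv]
    simp only
    have h6 : deriv u x₁ * w x₁ - u x₁ * deriv w x₁ = 0 := hCzero
    rw [hc]
    field_simp
    linarith [h6]
  have hfin := my_linODE_unique_zero hq hzd hzd' hzode hz1 hz1'
  intro x
  have := hfin x
  rw [hzdef] at this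
  simp only at this
  linarith


lemma my_poly_bound (P : Polynomial ℝ) (M : ℝ) :
    ∃ B : ℝ, 0 ≤ B ∧ ∀ y : ℝ, |y| ≤ M → |P.eval y| ≤ B := by
  obtain ⟨B, hB⟩ := (isCompact_Icc (a := -M) (b := M)).exists_bound_of_continuousOn
    (P.continuous.continuousOn)
  refine ⟨max B 0, le_max_right _ _, fun y hy => ?_⟩
  have := hB y (by rw [mem_Icc]; constructor <;> [linarith [abs_le.mp hy]; exact (abs_le.mp hy).2])
  rw [Real.norm_eq_abs] at this
  exact this.trans (le_max_left _ _)


end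

noncomputable section

/-- **Kernel of the linearized operator `S_ω`.**
Under (H1)–(H4), a smooth `L²` function `ρ` satisfies `S_ω(ρ) = 0` if and only if
`ρ ∈ span_ℝ{φ'_ω, i·φ_ω}`. -/
theorem kernel_of_Sop (F : Polynomial ℝ) (ω : ℝ) (hω : 0 < ω)
    (φfam : ℝ → ℝ → ℝ)
    (hH1 : SatisfiesH1 F) (hH23 : SatisfiesH23 F ω)
    (hsol : IsSoliton F ω (φfam ω)) (hH4 : SatisfiesH4 φfam ω) :
    ∀ ρ : ℝ → ℂ, ContDiff ℝ (⊤ : ℕ∞) ρ → MemLp ρ 2 volume →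
      ((∀ x : ℝ, Sop F ω (φfam ω) ρ x = 0) ↔
        ∃ a b : ℝ, ∀ x : ℝ,
          ρ x = (a : ℂ) * ((deriv (φfam ω) x : ℝ) : ℂ) + (b : ℂ) * Complex.I * ((φfam ω x : ℝ) : ℂ)) := by
  intro ρ hρC hρL2
  obtain ⟨hpos, heven, hsmT, hodeφ, hdec⟩ := hsol
  set φ : ℝ → ℝ := φfam ω with hφdef
  -- smoothness bookkeeping
  have hsm : ContDiff ℝ (⊤ : ℕ∞) φ := hsmT.of_le (by simp)
  have φdiff : Differentiable ℝ φ := hsm.differentiable (by simp)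
  have hsm' : ContDiff ℝ (⊤ : ℕ∞) (deriv φ) := (contDiff_infty_iff_deriv.mp hsm).2
  have φ'diff : Differentiable ℝ (deriv φ) := hsm'.differentiable (by simp)
  have hsm'' : ContDiff ℝ (⊤ : ℕ∞) (deriv (deriv φ)) := (contDiff_infty_iff_deriv.mp hsm').2
  have φ''diff : Differentiable ℝ (deriv (deriv φ)) := hsm''.differentiable (by simp)
  have hsqrt : 0 < Real.sqrt ω := Real.sqrt_pos.mpr hω
  -- L² facts for φ, φ', φ''
  obtain ⟨C0, hC0pos, hC0⟩ := hdec 0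
  obtain ⟨C1, hC1pos, hC1⟩ := hdec 1
  obtain ⟨C2, hC2pos, hC2⟩ := hdec 2
  have hφ0 : ∀ x, |φ x| ≤ C0 * Real.exp (-Real.sqrt ω * |x|) := by
    intro x; have := hC0 x; rwa [iteratedDeriv_zero] at this
  have hφ1 : ∀ x, |deriv φ x| ≤ C1 * Real.exp (-Real.sqrt ω * |x|) := by
    intro x; have := hC1 x; rwa [iteratedDeriv_one] at this
  have hφ2 : ∀ x, |deriv (deriv φ) x| ≤ C2 * Real.exp (-Real.sqrt ω * |x|) := by
    intro x; have := hC2 x; rwa [iteratedDeriv_succ, iteratedDeriv_one] at this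
  have hφL2 : MemLp φ 2 volume := my_memL2_of_exp_bound φ hsm.continuous C0 hsqrt hφ0
  have hφ'L2 : MemLp (deriv φ) 2 volume := my_memL2_of_exp_bound _ hsm'.continuous C1 hsqrt hφ1
  have hφ''L2 : MemLp (deriv (deriv φ)) 2 volume :=
    my_memL2_of_exp_bound _ hsm''.continuous C2 hsqrt hφ2
  -- pointwise bound on φ
  have hφbd : ∀ x, |φ x| ≤ C0 := by
    intro x
    refine (hφ0 x).trans ?_
    have h1 : Real.exp (-Real.sqrt ω * |x|) ≤ 1 :=
      Real.exp_le_one_iff.mpr (by nlinarith [abs_nonneg x])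
    nlinarith
  have hφsqbd : ∀ x, |φ x ^ 2| ≤ C0 ^ 2 := by
    intro x
    rw [_root_.abs_pow]
    exact pow_le_pow_left₀ (abs_nonneg _) (hφbd x) 2
  -- bounds for the potentials
  obtain ⟨B1, hB10, hB1⟩ := my_poly_bound F.derivative (C0 ^ 2)
  obtain ⟨B2, hB20, hB2⟩ := my_poly_bound F.derivative.derivative (C0 ^ 2)
  set c1 : ℝ → ℝ := fun x => F.derivative.eval (φ x ^ 2) with hc1def
  set c2 : ℝ → ℝ := fun x => F.derivative.derivative.eval (φ x ^ 2) * φ x ^ 2 with hc2def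
  set qm : ℝ → ℝ := fun x => ω - c1 x with hqmdef
  set qp : ℝ → ℝ := fun x => ω - c1 x - 2 * c2 x with hqpdef
  set Q : ℝ := |ω| + B1 + 2 * (B2 * C0 ^ 2) with hQdef
  have hc1bd : ∀ x, |c1 x| ≤ B1 := fun x => hB1 _ (hφsqbd x)
  have hc2bd : ∀ x, |c2 x| ≤ B2 * C0 ^ 2 := by
    intro x
    rw [hc2def]
    simp only
    rw [abs_mul]
    have h1 := hB2 _ (hφsqbd x)
    have h2 := hφsqbd x
    nlinarith [abs_nonneg (F.derivative.derivative.eval (φ x ^ 2)), abs_nonneg (φ x ^ 2)]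
  have hqmbd : ∀ x, |qm x| ≤ Q := by
    intro x
    have h1 := hc1bd x
    have h2 := abs_le.mp h1
    have h3 : 0 ≤ B2 * C0 ^ 2 := by positivity
    refine abs_le.mpr ⟨?_, ?_⟩ <;> simp only [hqmdef, hQdef] <;>
      nlinarith [le_abs_self ω, neg_abs_le ω]
  have hqpbd : ∀ x, |qp x| ≤ Q := by
    intro x
    have h2 := abs_le.mp (hc1bd x)
    have h4 := abs_le.mp (hc2bd x)
    refine abs_le.mpr ⟨?_, ?_⟩ <;> simp only [hqpdef, hQdef] <;>
      nlinarith [le_abs_self ω, neg_abs_le ω]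
  -- ODE for φ and φ'
  have hφode : ∀ x, deriv (deriv φ) x = qm x * φ x := by
    intro x
    rw [hodeφ x, hqmdef, hc1def]
    ring
  have hsq : ∀ x, HasDerivAt (fun y => φ y ^ 2) (2 * φ x * deriv φ x) x := by
    intro x
    have h := ((φdiff x).hasDerivAt).pow 2
    refine h.congr_deriv ?_
    push_cast
    ring
  have hp' : ∀ x, HasDerivAt (fun y => F.derivative.eval (φ y ^ 2))
      (F.derivative.derivative.eval (φ x ^ 2) * (2 * φ x * deriv φ x)) x := by
    intro x
    exact (F.derivative.hasDerivAt (φ x ^ 2)).comp x (hsq x)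
  have hφ3 : ∀ x, HasDerivAt (deriv (deriv φ)) (qp x * deriv φ x) x := by
    intro x
    have h1 : HasDerivAt (fun y => ω * φ y - F.derivative.eval (φ y ^ 2) * φ y)
        (ω * deriv φ x - (F.derivative.derivative.eval (φ x ^ 2) * (2 * φ x * deriv φ x) * φ x
          + F.derivative.eval (φ x ^ 2) * deriv φ x)) x :=
      (((φdiff x).hasDerivAt).const_mul ω).sub ((hp' x).mul ((φdiff x).hasDerivAt))
    have h2 : deriv (deriv φ) = fun y => ω * φ y - F.derivative.eval (φ y ^ 2) * φ y :=
      funext hodeφ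
    rw [h2]
    convert h1 using 1
    rw [hqpdef, hc1def, hc2def]
    ring
  have hφ'ode : ∀ x, deriv (deriv (deriv φ)) x = qp x * deriv φ x := fun x => (hφ3 x).deriv
  -- φ' is not identically zero
  have hφ'ne : ∃ x₁ : ℝ, deriv φ x₁ ≠ 0 := by
    by_contra hcon
    push_neg at hcon
    have hconst : ∀ x, φ x = φ 0 := fun x => is_const_of_deriv_eq_zero φdiff hcon x 0
    set x₁ : ℝ := |Real.log (φ 0 / C0)| / Real.sqrt ω + 1 with hx₁def
    have hx₁pos : 0 < x₁ := by positivity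
    have hkey : -Real.sqrt ω * |x₁| < Real.log (φ 0 / C0) := by
      rw [abs_of_pos hx₁pos, hx₁def]
      rw [neg_mul, neg_lt]
      rw [mul_add, mul_one, mul_div_cancel₀ _ (ne_of_gt hsqrt)]
      nlinarith [le_abs_self (Real.log (φ 0 / C0)), neg_abs_le (Real.log (φ 0 / C0))]
    have h1 : Real.exp (-Real.sqrt ω * |x₁|) < φ 0 / C0 := by
      have := Real.exp_lt_exp.mpr hkey
      rwa [Real.exp_log (div_pos (hpos 0) hC0pos)] at this
    have h2 := hφ0 x₁
    rw [hconst x₁, abs_of_pos (hpos 0)] at h2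
    have h3 : C0 * Real.exp (-Real.sqrt ω * |x₁|) < C0 * (φ 0 / C0) :=
      mul_lt_mul_of_pos_left h1 hC0pos
    rw [mul_div_cancel₀ _ (ne_of_gt hC0pos)] at h3
    linarith
  obtain ⟨x₁, hx₁⟩ := hφ'ne
  constructor
  · -- forward direction
    intro hS
    set u : ℝ → ℝ := fun x => (ρ x).re with hudef
    set v : ℝ → ℝ := fun x => (ρ x).im with hvdef
    have hρI : ContDiff ℝ (⊤ : ℕ∞) ρ := hρC.of_le (by simp)
    have hρd : Differentiable ℝ ρ := hρI.differentiable (by simp)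
    have hρd' : Differentiable ℝ (deriv ρ) :=
      ((contDiff_infty_iff_deriv.mp hρI).2).differentiable (by simp)
    have huC : ContDiff ℝ (⊤ : ℕ∞) u := Complex.reCLM.contDiff.comp hρI
    have hvC : ContDiff ℝ (⊤ : ℕ∞) v := Complex.imCLM.contDiff.comp hρI
    have hure : ∀ x, HasDerivAt u ((deriv ρ x).re) x := fun x =>
      Complex.reCLM.hasFDerivAt.comp_hasDerivAt x (hρd x).hasDerivAt
    have hvim : ∀ x, HasDerivAt v ((deriv ρ x).im) x := fun x =>
      Complex.imCLM.hasFDerivAt.comp_hasDerivAt x (hρd x).hasDerivAt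
    have hderivu : deriv u = fun x => (deriv ρ x).re := funext fun x => (hure x).deriv
    have hderivv : deriv v = fun x => (deriv ρ x).im := funext fun x => (hvim x).deriv
    have hud2 : ∀ x, deriv (deriv u) x = (deriv (deriv ρ) x).re := by
      intro x
      rw [hderivu]
      exact (Complex.reCLM.hasFDerivAt.comp_hasDerivAt x (hρd' x).hasDerivAt).deriv
    have hvd2 : ∀ x, deriv (deriv v) x = (deriv (deriv ρ) x).im := by
      intro x
      rw [hderivv]
      exact (Complex.imCLM.hasFDerivAt.comp_hasDerivAt x (hρd' x).hasDerivAt).deriv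
    have hit2 : iteratedDeriv 2 ρ = deriv (deriv ρ) := by
      rw [iteratedDeriv_succ, iteratedDeriv_one]
    -- extract real and imaginary equations
    have hueq : ∀ x, deriv (deriv u) x = qp x * u x := by
      intro x
      have h := hS x
      unfold Sop at h
      rw [hit2] at h
      rw [Complex.ext_iff] at h
      obtain ⟨hre, _⟩ := h
      simp only [Complex.add_re, Complex.sub_re, Complex.neg_re, Complex.mul_re,
        Complex.ofReal_re, Complex.ofReal_im, Complex.conj_re, Complex.conj_im,
        Complex.add_im, Complex.zero_re, zero_mul, sub_zero] at hre
      rw [hud2 x, hqpdef, hc1def, hc2def, hudef]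
      simp only
      linarith [hre]
    have hveq : ∀ x, deriv (deriv v) x = qm x * v x := by
      intro x
      have h := hS x
      unfold Sop at h
      rw [hit2] at h
      rw [Complex.ext_iff] at h
      obtain ⟨_, him⟩ := h
      simp only [Complex.add_im, Complex.sub_im, Complex.neg_im, Complex.mul_im,
        Complex.ofReal_re, Complex.ofReal_im, Complex.conj_re, Complex.conj_im,
        Complex.add_re, Complex.zero_im, zero_mul, add_zero, mul_zero] at him
      rw [hvd2 x, hqmdef, hc1def, hvdef]
      simp only
      linarith [him]
    have huL2 : MemLp u 2 volume := by
      have := hρL2.re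
      simpa [RCLike.re_to_complex] using this
    have hvL2 : MemLp v 2 volume := by
      have := hρL2.im
      simpa [RCLike.im_to_complex] using this
    obtain ⟨a, ha⟩ := my_prop_of_L2_solutions hqpbd huC hsm' hueq hφ'ode huL2 hφ'L2 hφ''L2 hx₁
    obtain ⟨b, hb⟩ := my_prop_of_L2_solutions hqmbd hvC hsm hveq hφode hvL2 hφL2 hφ'L2
      (ne_of_gt (hpos 0))
    refine ⟨a, b, fun x => ?_⟩
    have h1 : u x = a * deriv φ x := ha x
    have h2 : v x = b * φ x := hb x
    calc ρ x = ↑((ρ x).re) + ↑((ρ x).im) * Complex.I := (Complex.re_add_im (ρ x)).symm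
      _ = ↑(u x) + ↑(v x) * Complex.I := rfl
      _ = ↑a * ↑(deriv φ x) + ↑b * Complex.I * ↑(φ x) := by
          rw [h1, h2]
          push_cast
          ring
  · -- backward direction
    rintro ⟨a, b, hab⟩ x
    have hρfun : ρ = fun t => (a : ℂ) * ↑(deriv φ t) + (b : ℂ) * Complex.I * ↑(φ t) :=
      funext hab
    have hr1 : ∀ y, HasDerivAt (fun t => (a : ℂ) * ↑(deriv φ t) + (b : ℂ) * Complex.I * ↑(φ t))
        ((a : ℂ) * ↑(deriv (deriv φ) y) + (b : ℂ) * Complex.I * ↑(deriv φ y)) y := by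
      intro y
      exact ((((φ'diff y).hasDerivAt).ofReal_comp).const_mul (a : ℂ)).add
        ((((φdiff y).hasDerivAt).ofReal_comp).const_mul ((b : ℂ) * Complex.I))
    have hd1 : deriv (fun t => (a : ℂ) * ↑(deriv φ t) + (b : ℂ) * Complex.I * ↑(φ t))
        = fun y => (a : ℂ) * ↑(deriv (deriv φ) y) + (b : ℂ) * Complex.I * ↑(deriv φ y) :=
      funext fun y => (hr1 y).deriv
    have hr2 : ∀ y, HasDerivAt
        (fun t => (a : ℂ) * ↑(deriv (deriv φ) t) + (b : ℂ) * Complex.I * ↑(deriv φ t))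
        ((a : ℂ) * ↑(qp y * deriv φ y) + (b : ℂ) * Complex.I * ↑(deriv (deriv φ) y)) y := by
      intro y
      exact (((hφ3 y).ofReal_comp).const_mul (a : ℂ)).add
        ((((φ'diff y).hasDerivAt).ofReal_comp).const_mul ((b : ℂ) * Complex.I))
    have hit : iteratedDeriv 2 ρ x
        = (a : ℂ) * ↑(qp x * deriv φ x) + (b : ℂ) * Complex.I * ↑(deriv (deriv φ) x) := by
      rw [hρfun, iteratedDeriv_succ, iteratedDeriv_one, hd1]
      exact (hr2 x).deriv
    unfold Sop
    rw [hit]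
    have hρx : ρ x = (a : ℂ) * ↑(deriv φ x) + (b : ℂ) * Complex.I * ↑(φ x) := hab x
    rw [hρx]
    have hconj : conj ((a : ℂ) * ↑(deriv φ x) + (b : ℂ) * Complex.I * ↑(φ x))
        = (a : ℂ) * ↑(deriv φ x) - (b : ℂ) * Complex.I * ↑(φ x) := by
      simp [map_add, map_mul, Complex.conj_ofReal, Complex.conj_I]
      ring
    rw [hconj]
    have h3 : deriv (deriv φ) x = qm x * φ x := hφode x
    rw [h3, hqpdef, hqmdef, hc1def, hc2def]
    simp only
    push_cast
    ring

end
end
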